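/- arXiv:1012.4177 — 5 statements merged into one kernel-verified Lean document; each statement's English description precedes it below -/
import Mathlib

section
/- If H is a countable abelian group and Y is a countably infinite set, then the set Mono(H, T^Y) of injective group homomorphisms from H to T^Y is a dense G_δ-subset of Hom(H, T^Y), where T = ℝ/ℤ is the circle group and Hom(H, T^Y) carries the topology of pointwise convergence. -/
/-!
Characters into `ℚ/ℤ ⊆ 𝕋` separate the points of an abelian group `G`, so `G` embeds into `𝕋^G`.
Given any homomorphism `f : H → 𝕋^Y` and a finite set `K ⊆ Y`, plant such an embedding of `H`
on countably many coordinates outside `K` and keep `f` on the others: the result is injective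
and agrees with `f` on `K`, which gives density. Injectivity is the countable conjunction of
the open conditions `f h ≠ 0`, `h ≠ 0`, which gives the `G_δ` property.
-/

/-- `Hom(H,K)` realized as the set of addition-preserving maps inside the function
space `H → K`; the subtype carries the topology of pointwise convergence. -/
def homSet (G K : Type*) [AddCommGroup G] [AddCommGroup K] : Set (G → K) :=
  {f | ∀ x y, f (x + y) = f x + f y}

open Function Filter Topology

noncomputable def ratAddCircleToReal : AddCircle (1 : ℚ) →+ AddCircle (1 : ℝ) :=
  QuotientAddGroup.map _ _ (Rat.castHom ℝ).toAddMonoidHom <| by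
    rintro _ ⟨n, rfl⟩
    exact ⟨n, by simp⟩

theorem ratAddCircleToReal_coe (q : ℚ) : ratAddCircleToReal q = ((q : ℝ) : AddCircle (1 : ℝ)) :=
  rfl

theorem ratAddCircleToReal_injective : Injective ratAddCircleToReal := by
  refine (injective_iff_map_eq_zero _).mpr fun a ha => ?_
  induction a using QuotientAddGroup.induction_on with
  | H q =>
    obtain ⟨n, hn⟩ := (AddCircle.coe_eq_zero_iff 1).mp (ratAddCircleToReal_coe q ▸ ha)
    refine (AddCircle.coe_eq_zero_iff 1).mpr ⟨n, ?_⟩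
    rw [zsmul_one] at hn ⊢
    exact_mod_cast hn

theorem exists_injective_addMonoidHom_pi_addCircle (G : Type*) [AddCommGroup G] :
    ∃ φ : G →+ (G → AddCircle (1 : ℝ)), Injective φ := by
  have hsep (a : G) : ∃ c : CharacterModule G, a ≠ 0 → c a ≠ 0 := by
    by_cases ha : a = 0
    · exact ⟨0, fun h => (h ha).elim⟩
    · obtain ⟨c, hc⟩ := CharacterModule.exists_character_apply_ne_zero_of_ne_zero ha
      exact ⟨c, fun _ => hc⟩
  choose c hc using hsep
  refine ⟨AddMonoidHom.pi fun a => ratAddCircleToReal.comp (c a),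
    (injective_iff_map_eq_zero _).mpr fun a ha => ?_⟩
  by_contra ha0
  exact hc a ha0 <| ratAddCircleToReal_injective.eq_iff' (map_zero _) |>.mp (congrFun ha a)

theorem Set.Finite.exists_injective_forall_notMem {Z Y : Type*} [Countable Z] [Infinite Y]
    {K : Set Y} (hK : K.Finite) : ∃ e : Z → Y, Injective e ∧ ∀ z, e z ∉ K := by
  obtain ⟨c, hc⟩ := exists_injective_nat Z
  let ν := hK.infinite_compl.natEmbedding
  exact ⟨fun z => ν (c z), fun a b h => hc (ν.injective (Subtype.ext h)), fun z => (ν (c z)).2⟩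

namespace AddMonoidHom

variable {G Z Y A : Type*} [AddZeroClass G] [AddZeroClass A]

noncomputable def extendAlong (e : Z → Y) (φ : G →+ (Z → A)) (f : G →+ (Y → A)) :
    G →+ (Y → A) where
  toFun x := extend e (φ x) (f x)
  map_zero' := by simp only [map_zero]; exact extend_zero e
  map_add' x y := by simp only [map_add]; exact extend_add e _ _ _ _

variable {e : Z → Y} {φ : G →+ (Z → A)} {f : G →+ (Y → A)}

theorem extendAlong_apply_of_notMem_range {y : Y} (hy : y ∉ Set.range e) (x : G) :
    extendAlong e φ f x y = f x y :=
  extend_apply' _ _ _ fun ⟨z, hz⟩ => hy ⟨z, hz⟩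

theorem extendAlong_injective (he : Injective e) (hφ : Injective φ) :
    Injective (extendAlong e φ f) := fun a b hab =>
  hφ <| funext fun z => by simpa [extendAlong, he.extend_apply] using congrFun hab (e z)

end AddMonoidHom

section homSet

variable {G K : Type*} [AddCommGroup G] [AddCommGroup K]

theorem injective_iff_forall_ne_zero_of_mem_homSet {f : G → K} (hf : f ∈ homSet G K) :
    Injective f ↔ ∀ x, x ≠ 0 → f x ≠ 0 := by
  rw [← AddMonoidHom.mk'_apply f hf, injective_iff_map_eq_zero]
  exact forall_congr' fun x => not_imp_not.symm

theorem isGδ_setOf_injective_homSet [Countable G] [TopologicalSpace K] [T1Space K] :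
    IsGδ {f : homSet G K | Injective f.1} := by
  have : {f : homSet G K | Injective f.1} = ⋂ x : {x : G // x ≠ 0}, {f | f.1 x ≠ 0} := by
    ext f
    simp [injective_iff_forall_ne_zero_of_mem_homSet f.2]
  rw [this]
  exact .iInter fun x => IsOpen.isGδ <| isOpen_compl_singleton.preimage <|
    (continuous_apply x.1).comp continuous_subtype_val

end homSet

theorem dense_setOf_injective_homSet {G Z Y A : Type*} [AddCommGroup G] [Countable Z] [Infinite Y]
    [AddCommGroup A] [TopologicalSpace A] {φ : G →+ (Z → A)} (hφ : Injective φ) :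
    Dense {f : homSet G (Y → A) | Injective f.1} := by
  intro f
  have he (K : Finset Y) := K.finite_toSet.exists_injective_forall_notMem (Z := Z)
  choose e he_inj he_notMem using he
  -- `g K` agrees with `f` on `K`, so `g K → f` along the directed set of finite subsets of `Y`.
  let g (K : Finset Y) : homSet G (Y → A) :=
    ⟨AddMonoidHom.extendAlong (e K) φ (.mk' f.1 f.2), map_add _⟩
  refine mem_closure_of_tendsto (f := g) (b := atTop) ?_ <|
    .of_forall fun K => AddMonoidHom.extendAlong_injective (he_inj K) hφ
  refine tendsto_subtype_rng.mpr <| tendsto_pi_nhds.mpr fun x => tendsto_pi_nhds.mpr fun y => ?_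
  refine tendsto_const_nhds.congr' <| (eventually_ge_atTop {y}).mono fun K hK => ?_
  have hy : y ∉ Set.range (e K) := fun ⟨z, hz⟩ =>
    he_notMem K z (hz ▸ hK (Finset.mem_singleton_self y))
  exact (AddMonoidHom.extendAlong_apply_of_notMem_range (φ := φ) (f := .mk' f.1 f.2) hy x).symm

theorem stmt1_general {H : Type*} [AddCommGroup H] [Countable H]
    (Y : Type*) [Infinite Y] :
    IsGδ {f : ↥(homSet H (Y → AddCircle (1 : ℝ))) | Function.Injective f.1} ∧
    Dense {f : ↥(homSet H (Y → AddCircle (1 : ℝ))) | Function.Injective f.1} := by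
  obtain ⟨φ, hφ⟩ := exists_injective_addMonoidHom_pi_addCircle H
  exact ⟨isGδ_setOf_injective_homSet, dense_setOf_injective_homSet hφ⟩

/-- If `H` is a countable abelian group and `Y` is a countably infinite set, then the
set of injective homomorphisms `Mono(H, 𝕋^Y)` is a dense `G_δ`-subset of
`Hom(H, 𝕋^Y)`, where `𝕋 = ℝ/ℤ`. -/
theorem stmt1 {H : Type*} [AddCommGroup H] [Countable H]
    (Y : Type*) [Countable Y] [Infinite Y] :
    IsGδ {f : ↥(homSet H (Y → AddCircle (1 : ℝ))) | Function.Injective f.1} ∧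
    Dense {f : ↥(homSet H (Y → AddCircle (1 : ℝ))) | Function.Injective f.1} :=
  stmt1_general Y
end

section
/- Let G be an abelian group, E a subset of G, κ an uncountable cardinal, X a set of cardinality κ, and n a natural number with n ≠ 1. Then the set Π = {π ∈ Hom(G, T^X) : π(E) is dense in (T[n])^X} contains no nonempty G_δ-subset of Hom(G, T^X). -/
open Set Function

section ProductTopology

variable {ι Y : Type*} [TopologicalSpace Y]

theorem IsOpen.exists_finset_forall_eqOn_mem {U : Set (ι → Y)} (hU : IsOpen U)
    {f : ι → Y} (hf : f ∈ U) : ∃ I : Finset ι, ∀ g, EqOn g f I → g ∈ U := by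
  obtain ⟨I, u, hu, hIu⟩ := isOpen_pi_iff.mp hU f hf
  exact ⟨I, fun g hg => hIu fun i hi => hg hi ▸ (hu i hi).2⟩

theorem IsOpen.exists_finset_forall_eqOn_apply_mem {A : Type*} {U : Set (A → ι → Y)}
    (hU : IsOpen U) {f : A → ι → Y} (hf : f ∈ U) :
    ∃ I : Finset ι, ∀ g, (∀ a, EqOn (g a) (f a) I) → g ∈ U := by
  have hswap : Continuous fun (h : ι → A → Y) a i => h i a := by fun_prop
  obtain ⟨I, hI⟩ := (hU.preimage hswap).exists_finset_forall_eqOn_mem (f := fun i a => f a i) hf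
  exact ⟨I, fun g hg => hI (fun i a => g a i) fun i hi => funext fun a => hg a hi⟩

theorem IsGδ.exists_countable_forall_eqOn_apply_mem {A : Type*} {s : Set (A → ι → Y)}
    {B : Set s} (hB : IsGδ B) {f : s} (hf : f ∈ B) :
    ∃ S : Set ι, S.Countable ∧ ∀ g : s, (∀ a, EqOn (g.1 a) (f.1 a) S) → g ∈ B := by
  obtain ⟨𝒰, h𝒰open, h𝒰count, rfl⟩ := hB
  have hV : ∀ U ∈ 𝒰, ∃ V, IsOpen V ∧ Subtype.val ⁻¹' V = U :=
    fun U hU => isOpen_induced_iff.mp (h𝒰open U hU)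
  choose V hVopen hVU using hV
  have hI : ∀ U (hU : U ∈ 𝒰), ∃ I : Finset ι, ∀ g, (∀ a, EqOn (g a) (f.1 a) I) → g ∈ V U hU :=
    fun U hU => (hVopen U hU).exists_finset_forall_eqOn_apply_mem <| by
      rw [← mem_preimage, hVU U hU]
      exact hf U hU
  choose I hI using hI
  refine ⟨⋃ U, ⋃ hU : U ∈ 𝒰, I U hU,
    h𝒰count.biUnion_iff.mpr fun U hU => (I U hU).countable_toSet, fun g hg U hU => ?_⟩
  rw [← hVU U hU]
  exact hI U hU g.1 fun a i hi => hg a (mem_iUnion₂_of_mem hU hi)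

end ProductTopology

theorem update_zero_mem_homSet {G X M : Type*} [AddCommGroup G] [AddCommGroup M]
    [DecidableEq X] {π : G → X → M} (hπ : π ∈ homSet G (X → M)) (x₀ : X) :
    (fun a => update (π a) x₀ 0) ∈ homSet G (X → M) :=
  fun a b => by dsimp only; rw [hπ a b, ← update_add, add_zero]

theorem AddCircle.exists_nsmul_eq_zero_and_ne_zero {𝕜 : Type*} [Field 𝕜] [LinearOrder 𝕜]
    [IsStrictOrderedRing 𝕜] {p : 𝕜} [Fact (0 < p)] {n : ℕ} (hn : n ≠ 1) :
    ∃ t : AddCircle p, n • t = 0 ∧ t ≠ 0 := by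
  obtain ⟨q, hq, hqn⟩ := Nat.exists_prime_and_dvd hn
  have hord := addOrderOf_period_div (p := p) hq.pos
  refine ⟨_, addOrderOf_dvd_iff_nsmul_eq_zero.mp (hord ▸ hqn), fun h => ?_⟩
  rw [h, addOrderOf_zero] at hord
  exact hq.one_lt.ne hord

/-- Let `G` be an abelian group, `E ⊆ G`, `X` an uncountable set (of cardinality `κ`)
and `n ≠ 1` a natural number.  Writing `𝕋[n]^X = {f : X → 𝕋 | ∀ x, n • f x = 0}`
(so `𝕋[0] = 𝕋`), the set
`Π = {π ∈ Hom(G, 𝕋^X) : π(E) is dense in 𝕋[n]^X}` contains no nonempty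
`G_δ`-subset of `Hom(G, 𝕋^X)`. -/
theorem stmt3 {G : Type*} [AddCommGroup G] (E : Set G)
    (X : Type*) [Uncountable X] (n : ℕ) (hn : n ≠ 1)
    (B : Set ↥(homSet G (X → AddCircle (1 : ℝ))))
    (hB : B ⊆ {π : ↥(homSet G (X → AddCircle (1 : ℝ))) |
        π.1 '' E ⊆ {f : X → AddCircle (1 : ℝ) | ∀ x, n • f x = 0} ∧
        {f : X → AddCircle (1 : ℝ) | ∀ x, n • f x = 0} ⊆ closure (π.1 '' E)})
    (hGδ : IsGδ B) :
    B = ∅ := by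
  classical
  refine eq_empty_of_forall_notMem fun π hπ => ?_
  obtain ⟨S, hS, hSB⟩ := hGδ.exists_countable_forall_eqOn_apply_mem hπ
  obtain ⟨x₀, hx₀⟩ := (ne_univ_iff_exists_notMem S).mp fun h => not_countable_univ (h ▸ hS)
  obtain ⟨t, hnt, ht⟩ := AddCircle.exists_nsmul_eq_zero_and_ne_zero (p := (1 : ℝ)) hn
  let π' : homSet G (X → AddCircle (1 : ℝ)) :=
    ⟨fun a => update (π.1 a) x₀ 0, update_zero_mem_homSet π.2 x₀⟩
  have hπ' : π' ∈ B :=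
    hSB π' fun a x hx => update_of_ne (ne_of_mem_of_not_mem hx hx₀) _ _
  have hclosure : closure (π'.1 '' E) ⊆ {f | f x₀ = 0} :=
    closure_minimal (by rintro _ ⟨a, -, rfl⟩; simp [π'])
      (isClosed_eq (continuous_apply x₀) continuous_const)
  have hsingle : Pi.single x₀ t ∈ closure (π'.1 '' E) :=
    (hB hπ').2 fun x => by by_cases hx : x = x₀ <;> simp [hx, hnt]
  exact ht (by simpa using hclosure hsingle)
end

section
/- For every infinite subset S of ℤ, there exists a translation f : T^𝔠 → T^𝔠 of the group T^𝔠 (i.e., f(x) = x + a for a fixed a ∈ T^𝔠) such that for every point x ∈ T^𝔠 the S-orbit {f^n(x) : n ∈ S} is dense in T^𝔠. -/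
/-!
After replacing `S` by `-S` if necessary, `S` contains a lacunary sequence `m_k > 0` with
`m_{k+1} ≥ (k + 2) m_k`. For such a sequence, nested intervals produce, for any targets
`t_k ∈ 𝕋`, a single `α ∈ 𝕋` with `m_k α` within `1 / (k + 1)` of `t_k`. The step functions
`i ↦ c ⌊n i⌋` with rational values form a countable dense family in `𝕋^ℝ`; aiming at each of
them along infinitely many `k` and choosing `a i` coordinatewise, the points `m_k a` approach
every member of the family, so `{n a : n ∈ S}` is dense, and so is each of its translates.
-/

open Set Filter Topology

namespace AddCircle

theorem exists_zsmul_eq_of_mem_Icc (m : ℤ) (hm : 0 < m) (t : AddCircle (1 : ℝ)) (x : ℝ) :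
    ∃ c ∈ Icc x (x + 1 / m), m • (c : AddCircle (1 : ℝ)) = t := by
  obtain ⟨s, rfl⟩ := QuotientAddGroup.mk_surjective t
  have hm' : (0 : ℝ) < m := by exact_mod_cast hm
  refine ⟨(⌈m * x - s⌉ + s) / m, ⟨?_, ?_⟩, ?_⟩
  · rw [le_div_iff₀ hm']
    linarith [Int.le_ceil (m * x - s)]
  · rw [div_le_iff₀ hm', add_mul, one_div_mul_cancel hm'.ne']
    linarith [Int.ceil_lt_add_one (m * x - s)]
  · rw [← coe_zsmul, zsmul_eq_mul, mul_div_cancel₀ _ hm'.ne', coe_add]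
    simp

theorem dist_zsmul_coe_le (m : ℤ) (hm : 0 ≤ m) (a b : ℝ) :
    dist (m • (a : AddCircle (1 : ℝ))) (m • (b : AddCircle (1 : ℝ))) ≤ m * |a - b| := by
  rw [dist_eq_norm, ← smul_sub, ← coe_sub, ← coe_zsmul, zsmul_eq_mul]
  calc _ ≤ |(m : ℝ) * (a - b)| := QuotientAddGroup.norm_mk_le_norm
    _ = _ := by rw [abs_mul, abs_of_nonneg (by exact_mod_cast hm)]

theorem exists_forall_dist_zsmul_le (m : ℕ → ℤ) (hm : ∀ k, 0 < m k) (r : ℕ → ℝ)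
    (hr : ∀ k, 0 ≤ r k) (hgap : ∀ k, 1 / m (k + 1) + 2 * r (k + 1) ≤ 2 * r k)
    (t : ℕ → AddCircle (1 : ℝ)) :
    ∃ α : ℝ, ∀ k, dist (m k • (α : AddCircle (1 : ℝ))) (t k) ≤ m k * r k := by
  -- The solutions of `m (k + 1) • c = t (k + 1)` are `1 / m (k + 1)` apart, and by `hgap` such
  -- a gap fits into `[c - r k, c + r k]` with room `r (k + 1)` left on both sides.
  have step : ∀ k (c : ℝ), ∃ c' : ℝ, m (k + 1) • (c' : AddCircle (1 : ℝ)) = t (k + 1) ∧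
      Icc (c' - r (k + 1)) (c' + r (k + 1)) ⊆ Icc (c - r k) (c + r k) := by
    intro k c
    obtain ⟨c', ⟨hlo, hhi⟩, hc'⟩ :=
      exists_zsmul_eq_of_mem_Icc _ (hm (k + 1)) (t (k + 1)) (c - r k + r (k + 1))
    exact ⟨c', hc', Icc_subset_Icc (by linarith) (by linarith [hgap k])⟩
  choose next hnext_eq hnext_sub using step
  obtain ⟨c₀, -, hc₀⟩ := exists_zsmul_eq_of_mem_Icc _ (hm 0) (t 0) 0
  obtain ⟨c, hc_zero, hc_succ⟩ : ∃ c : ℕ → ℝ, c 0 = c₀ ∧ ∀ k, c (k + 1) = next k (c k) :=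
    ⟨fun k => Nat.rec c₀ next k, rfl, fun _ => rfl⟩
  have hc : ∀ k, m k • (c k : AddCircle (1 : ℝ)) = t k := by
    rintro (_ | k)
    · rwa [hc_zero]
    · rw [hc_succ]; exact hnext_eq k (c k)
  have hanti : Antitone fun k => Icc (c k - r k) (c k + r k) :=
    antitone_nat_of_succ_le fun k => hc_succ k ▸ hnext_sub k (c k)
  refine ⟨⨆ k, (c k - r k), fun k => ?_⟩
  have hmem := mem_iInter.1
    (ciSup_mem_iInter_Icc_of_antitone_Icc hanti fun k => by linarith [hr k]) k
  rw [← hc k]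
  refine (dist_zsmul_coe_le _ (hm k).le _ _).trans ?_
  gcongr
  · exact_mod_cast (hm k).le
  · rw [abs_sub_le_iff]; constructor <;> linarith [hmem.1, hmem.2]

theorem exists_forall_dist_zsmul_le_of_lacunary (m : ℕ → ℤ) (hm : ∀ k, 0 < m k)
    (hlac : ∀ k, (k + 2) * m k ≤ m (k + 1)) (t : ℕ → AddCircle (1 : ℝ)) :
    ∃ α : AddCircle (1 : ℝ), ∀ k, dist (m k • α) (t k) ≤ 1 / (k + 1) := by
  have hm' : ∀ k, (0 : ℝ) < m k := fun k => by exact_mod_cast hm k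
  have hgap : ∀ k : ℕ, 1 / (m (k + 1) : ℝ) + 2 * (1 / ((↑(k + 1) + 1) * m (k + 1)))
      ≤ 2 * (1 / ((k + 1) * m k)) := by
    intro k
    have hlac' : ((k : ℝ) + 2) * m k ≤ m (k + 1) := by exact_mod_cast hlac k
    have := hm' k
    have := hm' (k + 1)
    push_cast
    field_simp
    nlinarith
  obtain ⟨α, hα⟩ := exists_forall_dist_zsmul_le m hm (fun k => 1 / ((k + 1) * m k))
    (fun k => by have := hm' k; positivity) hgap t
  refine ⟨α, fun k => (hα k).trans_eq ?_⟩
  field_simp [(hm' k).ne']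

theorem denseRange_ratCast : DenseRange fun q : ℚ => ((q : ℝ) : AddCircle (1 : ℝ)) :=
  QuotientAddGroup.mk_surjective.denseRange.comp Rat.denseRange_cast continuous_quotient_mk'

end AddCircle

theorem Set.exists_lacunary_seq_of_not_bddAbove {S : Set ℤ} (hS : ¬BddAbove S) :
    ∃ m : ℕ → ℤ, (∀ k, m k ∈ S) ∧ (∀ k, 0 < m k) ∧ ∀ k, (k + 2) * m k ≤ m (k + 1) := by
  choose next hnext_mem hnext_gt using not_bddAbove_iff.1 hS
  obtain ⟨m, hm_zero, hm_succ⟩ :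
      ∃ m : ℕ → ℤ, m 0 = next 0 ∧ ∀ k, m (k + 1) = next ((k + 2) * m k) :=
    ⟨fun k => Nat.rec (next 0) (fun k mk => next ((k + 2) * mk)) k, rfl, fun _ => rfl⟩
  have hlac : ∀ k, (k + 2) * m k ≤ m (k + 1) := fun k => hm_succ k ▸ (hnext_gt _).le
  have hpos : ∀ k, 0 < m k := by
    intro k
    induction k with
    | zero => exact hm_zero ▸ hnext_gt 0
    | succ k ih => nlinarith [hlac k]
  refine ⟨m, fun k => ?_, hpos, hlac⟩
  cases k with
  | zero => exact hm_zero ▸ hnext_mem 0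
  | succ k => exact hm_succ k ▸ hnext_mem _

theorem Finset.eventually_injOn_floor_mul (F : Finset ℝ) :
    ∀ᶠ n : ℕ in atTop, InjOn (fun i => ⌊(n : ℝ) * i⌋) F := by
  have hpair : ∀ i ∈ F, ∀ j ∈ F, ∀ᶠ n : ℕ in atTop, ⌊(n : ℝ) * i⌋ = ⌊(n : ℝ) * j⌋ → i = j := by
    intro i _ j _
    by_cases hij : i = j
    · exact Eventually.of_forall fun _ _ => hij
    obtain ⟨N, hN⟩ := exists_nat_gt (1 / |i - j|)
    filter_upwards [eventually_ge_atTop N] with n hn hfloor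
    have hlt := Int.abs_sub_lt_one_of_floor_eq_floor hfloor
    rw [← mul_sub, abs_mul, Nat.abs_cast] at hlt
    rw [div_lt_iff₀ (abs_pos.2 (sub_ne_zero.2 hij))] at hN
    have : (N : ℝ) ≤ n := by exact_mod_cast hn
    nlinarith [abs_nonneg (i - j)]
  filter_upwards [F.eventually_all.2 fun i hi => F.eventually_all.2 (hpair i hi)]
    with n hn i hi j hj using hn i hi j hj

/-- The countable dense family of `𝕋^ℝ` from the Hewitt–Marczewski–Pondiczery theorem. -/
noncomputable def ratStep (n : ℕ) (c : ℤ →₀ ℚ) (i : ℝ) : AddCircle (1 : ℝ) :=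
  ((c ⌊(n : ℝ) * i⌋ : ℚ) : ℝ)

theorem denseRange_ratStep : DenseRange fun p : ℕ × (ℤ →₀ ℚ) => ratStep p.1 p.2 := by
  refine dense_iff_inter_open.2 fun U hU ⟨y, hy⟩ => ?_
  obtain ⟨F, V, hV, hFV⟩ := isOpen_pi_iff.1 hU y hy
  choose q hq using fun i (hi : i ∈ F) =>
    AddCircle.denseRange_ratCast.exists_mem_open (hV i hi).1 ⟨y i, (hV i hi).2⟩
  obtain ⟨n, hn⟩ := F.eventually_injOn_floor_mul.exists
  let c : ℤ →₀ ℚ := ∑ j ∈ F.attach, Finsupp.single ⌊(n : ℝ) * j⌋ (q j j.2)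
  refine ⟨ratStep n c, hFV fun i hi => ?_, (n, c), rfl⟩
  have hc : c ⌊(n : ℝ) * i⌋ = q i hi := by
    simp only [c, Finsupp.finsetSum_apply]
    rw [Finset.sum_eq_single_of_mem ⟨i, hi⟩ (Finset.mem_attach _ _)]
    · simp
    · intro j _ hji
      exact Finsupp.single_eq_of_ne fun h => hji (Subtype.ext (hn j.2 hi h.symm))
  simpa [ratStep, hc] using hq i hi

theorem exists_dense_zsmul_image_of_not_bddAbove {S : Set ℤ} (hS : ¬BddAbove S) :
    ∃ a : ℝ → AddCircle (1 : ℝ), Dense ((fun n : ℤ => n • a) '' S) := by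
  obtain ⟨m, hmS, hm, hlac⟩ := S.exists_lacunary_seq_of_not_bddAbove hS
  obtain ⟨e, he⟩ := exists_surjective_nat (ℕ × (ℤ →₀ ℚ))
  -- Step `k` aims at member `e (unpair k).1`, so member `e j` is aimed at along `pair j N`.
  let target : ℕ → ℝ → AddCircle (1 : ℝ) := fun k => ratStep (e k.unpair.1).1 (e k.unpair.1).2
  choose a ha using fun i =>
    AddCircle.exists_forall_dist_zsmul_le_of_lacunary m hm hlac fun k => target k i
  refine ⟨a, dense_closure.1 (denseRange_ratStep.mono ?_)⟩
  rintro _ ⟨p, rfl⟩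
  obtain ⟨j, rfl⟩ := he p
  have hk : Tendsto (fun N => Nat.pair j N) atTop atTop :=
    tendsto_atTop_mono (Nat.right_le_pair j) tendsto_id
  refine mem_closure_of_tendsto (f := fun N => m (Nat.pair j N) • a) (b := atTop) ?_
    (Eventually.of_forall fun N => mem_image_of_mem _ (hmS _))
  refine tendsto_pi_nhds.2 fun i => tendsto_iff_dist_tendsto_zero.2 ?_
  refine squeeze_zero (fun _ => dist_nonneg) (fun N => ?_)
    (tendsto_one_div_add_atTop_nhds_zero_nat.comp hk)
  simpa [target] using ha i (Nat.pair j N)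

/-- For every infinite `S ⊆ ℤ` there is a translation `f : x ↦ x + a` of
`𝕋^𝔠 = ℝ → AddCircle 1` such that for every point `x` the `S`-orbit
`{f^n(x) : n ∈ S} = {x + n • a : n ∈ S}` is dense in `𝕋^𝔠`. -/
theorem stmt13 (S : Set ℤ) (hS : S.Infinite) :
    ∃ a : ℝ → AddCircle (1 : ℝ), ∀ x : ℝ → AddCircle (1 : ℝ),
      Dense ((fun n : ℤ => x + n • a) '' S) := by
  suffices ∃ a : ℝ → AddCircle (1 : ℝ), Dense ((fun n : ℤ => n • a) '' S) by
    obtain ⟨a, ha⟩ := this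
    refine ⟨a, fun x => ?_⟩
    simpa [image_image, ← image_vadd] using ha.vadd x
  by_cases hS_bdd : BddAbove S
  · have hneg : ¬BddAbove (-S) := fun h =>
      hS (BddBelow.finite_of_bddAbove (bddAbove_neg.1 h) hS_bdd)
    obtain ⟨a, ha⟩ := exists_dense_zsmul_image_of_not_bddAbove hneg
    refine ⟨-a, ?_⟩
    simpa only [← image_neg_eq_neg, image_image, neg_smul, smul_neg] using ha
  · exact exists_dense_zsmul_image_of_not_bddAbove hS_bdd
end

section
/- For every infinite set S of integers, there exists an indexed family {x_α : α < 𝔠} of reals in [0,1) with the following property: for every ε > 0, every k ∈ ℕ⁺, all reals y₁,…,y_k, and all distinct indices α₁,…,α_k < 𝔠, there exist s ∈ S and integers n₁,…,n_k such that |s·x_{α_j} − y_j − n_j| < ε for every j = 1,…,k. -/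
/-!
Index the family by binary sequences β, of which there are 𝔠, and take `x β` in the
intersection of nested closed pieces, the `m`-th of which depends only on finitely many letters
of β. Countably many requirements (a depth `l`, rational targets for the words of length `l`, an
accuracy) are met one per stage: there are finitely many pieces, each with nonempty interior,
so every `s ∈ S` of large enough modulus puts a point of each piece exactly on its target mod 1,
and we shrink each piece to a small closed ball around such a point. Distinct indices have
distinct prefixes of some length `l`, so targets prescribed on words of length `l` are
independent for the chosen indices.
-/

open Filter Set Metric

lemma Int.eventually_cofinite_exists_mem_mul_sub_eq {U : Set ℝ} (hU : IsOpen U)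
    (hne : U.Nonempty) (y : ℝ) : ∀ᶠ s : ℤ in cofinite, ∃ x ∈ U, ∃ n : ℤ, s * x - y = n := by
  obtain ⟨c, hc⟩ := hne
  obtain ⟨r, hr, hball⟩ := Metric.isOpen_iff.1 hU c hc
  have hlarge : ∀ᶠ s : ℤ in cofinite, 1 / (2 * r) < |(s : ℝ)| :=
    (tendsto_norm_cocompact_atTop.comp Int.tendsto_coe_cofinite).eventually_gt_atTop _
  filter_upwards [hlarge] with s hs
  have hs0 : 0 < |(s : ℝ)| := lt_trans (by positivity) hs
  refine ⟨(y + round (s * c - y)) / s, hball ?_, round (s * c - y), ?_⟩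
  · rw [mem_ball, Real.dist_eq]
    calc |(y + round (s * c - y)) / s - c|
        = |s * c - y - round (s * c - y)| / |(s : ℝ)| := by
          rw [← abs_div, ← abs_neg]; congr 1; field_simp [abs_pos.1 hs0]; ring
      _ ≤ (1 / 2) / |(s : ℝ)| := by gcongr; exact abs_sub_round _
      _ < r := by rw [div_lt_iff₀ hs0]; rw [div_lt_iff₀ (by positivity)] at hs; linarith
  · field_simp [abs_pos.1 hs0]; ring

theorem Set.Infinite.exists_closed_subsets_approx {ι : Type*} [Finite ι] {S : Set ℤ}
    (hS : S.Infinite) {U : ι → Set ℝ} (hU : ∀ i, (interior (U i)).Nonempty) (y : ι → ℝ)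
    {ε : ℝ} (hε : 0 < ε) :
    ∃ s ∈ S, ∃ V : ι → Set ℝ, ∀ i, IsClosed (V i) ∧ (interior (V i)).Nonempty ∧ V i ⊆ U i ∧
      ∀ x ∈ V i, ∃ n : ℤ, |s * x - y i - n| < ε := by
  have hev : ∀ᶠ s : ℤ in cofinite, ∀ i, ∃ x ∈ interior (U i), ∃ n : ℤ, s * x - y i = n :=
    eventually_all.2 fun i =>
      Int.eventually_cofinite_exists_mem_mul_sub_eq isOpen_interior (hU i) _
  obtain ⟨s, hsS, hs⟩ := (frequently_cofinite_iff_infinite.2 hS).and_eventually hev |>.exists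
  choose x hxU n hn using hs
  have hnhds : ∀ i, interior (U i) ∩ {z | |s * z - y i - n i| < ε} ∈ nhds (x i) := fun i =>
    inter_mem (isOpen_interior.mem_nhds (hxU i)) <|
      (isOpen_lt (by fun_prop) continuous_const).mem_nhds (by simp [hn i, hε])
  choose r hr hsub using fun i => nhds_basis_closedBall.mem_iff.1 (hnhds i)
  refine ⟨s, hsS, fun i => closedBall (x i) (r i), fun i => ⟨isClosed_closedBall, ?_, ?_, ?_⟩⟩
  · exact (nonempty_ball.2 (hr i)).mono ball_subset_interior_closedBall
  · exact (hsub i).trans (inter_subset_left.trans interior_subset)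
  · exact fun z hz => ⟨n i, (hsub i hz).2⟩

def initSeg {α : Type*} (l : ℕ) (β : ℕ → α) : Fin l → α := fun i => β i

theorem exists_injective_initSeg {ι α : Type*} [Finite ι] {β : ι → ℕ → α}
    (hβ : Function.Injective β) : ∃ l, Function.Injective fun i => initSeg l (β i) := by
  have hev : ∀ᶠ l in atTop, ∀ p : ι × ι, p.1 ≠ p.2 → initSeg l (β p.1) ≠ initSeg l (β p.2) := by
    refine eventually_all.2 fun p => ?_
    by_cases hp : p.1 = p.2
    · exact Eventually.of_forall fun _ h => absurd hp h
    obtain ⟨d, hd⟩ := Function.ne_iff.1 (hβ.ne hp)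
    filter_upwards [eventually_gt_atTop d] with l hl
    exact fun _ heq => hd (congrFun heq ⟨d, hl⟩)
  obtain ⟨l, hl⟩ := hev.exists
  exact ⟨l, fun i j hij => by_contra fun h => hl (i, j) h hij⟩

structure CantorLevel (α : Type*) where
  depth : ℕ
  piece : (Fin depth → α) → Set ℝ
  isClosed_piece : ∀ σ, IsClosed (piece σ)
  nonempty_interior_piece : ∀ σ, (interior (piece σ)).Nonempty

namespace CantorLevel

variable {α : Type*}

def branchPiece (P : CantorLevel α) (β : ℕ → α) : Set ℝ := P.piece (initSeg P.depth β)

theorem exists_refinement [Finite α] (P : CantorLevel α) {S : Set ℤ} (hS : S.Infinite) {l : ℕ}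
    (y : (Fin l → α) → ℝ) {ε : ℝ} (hε : 0 < ε) :
    ∃ Q : CantorLevel α, (∀ β, Q.branchPiece β ⊆ P.branchPiece β) ∧
      ∃ s ∈ S, ∀ β, ∀ x ∈ Q.branchPiece β, ∃ n : ℤ, |s * x - y (initSeg l β) - n| < ε := by
  -- Cutting `initSeg (max P.depth l) β` down with `Fin.castLE` gives the shorter `initSeg`
  -- definitionally, which is what makes the final `exact` typecheck.
  obtain ⟨s, hsS, V, hV⟩ := hS.exists_closed_subsets_approx (ι := Fin (max P.depth l) → α)
    (U := fun σ => P.piece fun i => σ (Fin.castLE (le_max_left _ _) i))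
    (fun _ => P.nonempty_interior_piece _)
    (fun σ => y fun i => σ (Fin.castLE (le_max_right _ _) i)) hε
  exact ⟨⟨_, V, fun σ => (hV σ).1, fun σ => (hV σ).2.1⟩, fun β => (hV _).2.2.1, s, hsS,
    fun β => (hV _).2.2.2⟩

theorem nonempty_iInter_branchPiece {P : ℕ → CantorLevel α}
    (hP : ∀ m β, (P (m + 1)).branchPiece β ⊆ (P m).branchPiece β) (β : ℕ → α)
    (hP₀ : IsCompact ((P 0).branchPiece β)) : (⋂ m, (P m).branchPiece β).Nonempty :=
  hP₀.nonempty_iInter_of_sequence_nonempty_isCompact_isClosed _ (hP · β)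
    (fun m => ((P m).nonempty_interior_piece _).mono interior_subset)
    (fun m => (P m).isClosed_piece _)

end CantorLevel

theorem exists_branch_approx {α : Type*} [Finite α] {S : Set ℤ} (hS : S.Infinite) :
    ∃ x : (ℕ → α) → ℝ, (∀ β, x β ∈ Icc (0 : ℝ) (1 / 2)) ∧
      ∀ l (y : (Fin l → α) → ℝ) (ε : ℝ), 0 < ε →
        ∃ s ∈ S, ∀ β, ∃ n : ℤ, |s * x β - y (initSeg l β) - n| < ε := by
  obtain ⟨e, he⟩ := exists_surjective_nat (Σ l : ℕ, ((Fin l → α) → ℚ) × ℕ)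
  let P₀ : CantorLevel α := ⟨0, fun _ => Icc 0 (1 / 2), fun _ => isClosed_Icc,
    fun _ => by rw [interior_Icc]; exact nonempty_Ioo.2 (by norm_num)⟩
  choose next hnext s hsS hs using
    fun (P : CantorLevel α) (r : Σ l, ((Fin l → α) → ℚ) × ℕ) =>
    P.exists_refinement hS (fun σ => (r.2.1 σ : ℝ)) (Nat.one_div_pos_of_nat (n := r.2.2))
  let P : ℕ → CantorLevel α := fun m => Nat.rec P₀ (fun m Q => next Q (e m)) m
  choose x hx using fun β =>
    CantorLevel.nonempty_iInter_branchPiece (P := P) (fun m β => hnext _ _ β) β isCompact_Icc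
  have hrat : ∀ r : Σ l, ((Fin l → α) → ℚ) × ℕ, ∃ s ∈ S, ∀ β, ∃ n : ℤ,
      |s * x β - r.2.1 (initSeg r.1 β) - n| < 1 / (r.2.2 + 1) := by
    intro r
    obtain ⟨m, rfl⟩ := he r
    exact ⟨s (P m) (e m), hsS _ _, fun β => hs _ _ β _ (mem_iInter.1 (hx β) (m + 1))⟩
  refine ⟨x, fun β => mem_iInter.1 (hx β) 0, fun l y ε hε => ?_⟩
  choose q hq using fun σ => exists_rat_near (y σ) (half_pos hε)
  obtain ⟨N, hN⟩ := exists_nat_one_div_lt (half_pos hε)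
  obtain ⟨s, hsS, hs⟩ := hrat ⟨l, q, N⟩
  refine ⟨s, hsS, fun β => ?_⟩
  obtain ⟨n, hn⟩ := hs β
  refine ⟨n, ?_⟩
  set w := initSeg l β
  calc |s * x β - y w - n| = |(s * x β - q w - n) + (q w - y w)| := by ring_nf
    _ ≤ |s * x β - q w - n| + |q w - y w| := abs_add_le _ _
    _ < ε / 2 + ε / 2 := add_lt_add (hn.trans hN) (by rw [abs_sub_comm]; exact hq w)
    _ = ε := add_halves ε

/-- For every infinite set `S` of integers there is a family `{x_α : α < 𝔠}` of reals
in `[0,1)` (indexed by `ℝ`, a set of cardinality `𝔠`) such that: for every `ε > 0`,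
every `k ∈ ℕ⁺`, all reals `y₁, …, y_k` and all distinct indices `α₁, …, α_k`, there
exist `s ∈ S` and integers `n₁, …, n_k` with `|s • x_{α_j} − y_j − n_j| < ε` for all
`j`. -/
theorem stmt14 (S : Set ℤ) (hS : S.Infinite) :
    ∃ x : ℝ → ℝ, (∀ α : ℝ, x α ∈ Set.Ico (0 : ℝ) 1) ∧
      ∀ ε : ℝ, 0 < ε → ∀ k : ℕ, 0 < k → ∀ y : Fin k → ℝ, ∀ α : Fin k → ℝ,
        Function.Injective α →
          ∃ s ∈ S, ∃ n : Fin k → ℤ,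
            ∀ j : Fin k, |(s : ℝ) * x (α j) - y j - (n j : ℝ)| < ε := by
  obtain ⟨x, hx01, hx⟩ := exists_branch_approx (α := Bool) hS
  obtain ⟨g⟩ : Nonempty (ℝ ↪ (ℕ → Bool)) := by rw [← Cardinal.le_def]; simp [Cardinal.mk_real]
  refine ⟨fun a => x (g a), fun a => ⟨(hx01 _).1, (hx01 _).2.trans_lt (by norm_num)⟩, ?_⟩
  intro ε hε k _ y α hα
  obtain ⟨l, hl⟩ := exists_injective_initSeg (g.injective.comp hα)
  obtain ⟨s, hsS, hs⟩ := hx l (Function.extend (fun j => initSeg l (g (α j))) y 0) ε hε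
  choose n hn using fun j => hs (g (α j))
  exact ⟨s, hsS, n, fun j => hl.extend_apply y 0 j ▸ hn j⟩
end

section
/- Let G be an abelian group, K a compact metrizable abelian group, and S = {a_n : n ∈ ℕ} a one-to-one sequence in G. Then the set U(S,K) = {h ∈ Hom(G,K) : the sequence (h(a_n))_n is uniformly distributed in K} is an F_σδ-subset of Hom(G,K). -/
open MeasureTheory Filter

/-- A sequence `x` in a compact abelian topological group `K` with normalized Haar
measure `μ` is uniformly distributed if `(1/n) ∑_{j<n} f(x_j) → ∫ f dμ` for every
continuous `f : K → ℂ`. -/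
def UniformlyDistributed {K : Type*} [TopologicalSpace K] [MeasurableSpace K]
    (μ : Measure K) (x : ℕ → K) : Prop :=
  ∀ f : C(K, ℂ), Tendsto (fun n : ℕ => (n : ℂ)⁻¹ * ∑ j ∈ Finset.range n, f (x j))
    atTop (nhds (∫ k, f k ∂μ))

/-- A set is `F_σδ` if it is a countable intersection of countable unions of closed
sets. -/
def IsFsigmaDelta {X : Type*} [TopologicalSpace X] (s : Set X) : Prop :=
  ∃ F : ℕ → ℕ → Set X, (∀ i j, IsClosed (F i j)) ∧ s = ⋂ i, ⋃ j, F i j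

/-!
Uniform distribution of `(x_n)` means that the Cesàro means of `f (x_n)` converge to `∫ f dμ` for
every `f ∈ C(K, ℂ)`. These means are `1`-Lipschitz in `f` and the integral is continuous in `f`, so
the set of `f` for which convergence holds is closed, and it suffices to test `f` along a dense
sequence of `C(K, ℂ)`, which is separable because `K` is compact metrizable. For each fixed `f`,
the means of `f (h (a_j))` are continuous in `h ∈ Hom(G, K)`, and the set where a sequence of
continuous functions converges to a fixed limit is `F_σδ`; a countable intersection of `F_σδ`
sets is again `F_σδ`.
-/

open Topology

theorem IsFsigmaDelta.iInter {X : Type*} [TopologicalSpace X] {s : ℕ → Set X}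
    (hs : ∀ k, IsFsigmaDelta (s k)) : IsFsigmaDelta (⋂ k, s k) := by
  choose F hF_closed hF using hs
  refine ⟨fun m => F m.unpair.1 m.unpair.2, fun m => hF_closed _ _, ?_⟩
  ext x
  simp only [hF, Set.mem_iInter]
  exact ⟨fun h m => h _ _, fun h k i => by simpa using h (Nat.pair k i)⟩

theorem isFsigmaDelta_setOf_tendsto {X E : Type*} [TopologicalSpace X] [PseudoMetricSpace E]
    {u : ℕ → X → E} (hu : ∀ n, Continuous (u n)) (l : E) :
    IsFsigmaDelta {x | Tendsto (u · x) atTop (𝓝 l)} := by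
  refine ⟨fun i N => ⋂ n ≥ N, u n ⁻¹' Metric.closedBall l (1 / (i + 1)),
    fun i N => isClosed_biInter fun n _ => Metric.isClosed_closedBall.preimage (hu n), ?_⟩
  ext x
  simp [Metric.nhds_basis_closedBall_inv_nat_succ.tendsto_right_iff, eventually_atTop]

theorem ContinuousMap.continuous_integral {X E : Type*} [TopologicalSpace X] [CompactSpace X]
    [MeasurableSpace X] [BorelSpace X] [NormedAddCommGroup E] [NormedSpace ℝ E]
    [SecondCountableTopologyEither X E] (μ : Measure X) [IsFiniteMeasure μ] :
    Continuous fun f : C(X, E) => ∫ x, f x ∂μ :=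
  (MeasureTheory.continuous_integral.comp (ContinuousMap.toLp 1 μ ℝ).continuous).congr
    fun f => integral_congr_ae (ContinuousMap.coeFn_toLp (𝕜 := ℝ) μ f)

section CesaroMean

variable {K : Type*} [TopologicalSpace K]

noncomputable def cesaroMean (x : ℕ → K) (n : ℕ) (f : C(K, ℂ)) : ℂ :=
  (n : ℂ)⁻¹ * ∑ j ∈ Finset.range n, f (x j)

theorem continuous_cesaroMean {X : Type*} [TopologicalSpace X] {x : X → ℕ → K}
    (hx : ∀ j, Continuous (x · j)) (n : ℕ) (f : C(K, ℂ)) :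
    Continuous fun p => cesaroMean (x p) n f := by
  unfold cesaroMean
  fun_prop

theorem cesaroMean_sub (x : ℕ → K) (n : ℕ) (f g : C(K, ℂ)) :
    cesaroMean x n (f - g) = cesaroMean x n f - cesaroMean x n g := by
  simp only [cesaroMean, ContinuousMap.sub_apply, Finset.sum_sub_distrib, mul_sub]

variable [CompactSpace K]

theorem norm_cesaroMean_le (x : ℕ → K) (n : ℕ) (f : C(K, ℂ)) :
    ‖cesaroMean x n f‖ ≤ ‖f‖ := by
  rcases n.eq_zero_or_pos with rfl | hn
  · simp [cesaroMean]
  calc ‖cesaroMean x n f‖ ≤ (n : ℝ)⁻¹ * (n * ‖f‖) := by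
        rw [cesaroMean, norm_mul, norm_inv, Complex.norm_natCast]
        gcongr
        simpa using norm_sum_le_of_le (Finset.range n) fun j _ => f.norm_coe_le_norm (x j)
    _ = ‖f‖ := by field_simp

theorem lipschitzWith_cesaroMean (x : ℕ → K) (n : ℕ) : LipschitzWith 1 (cesaroMean x n) :=
  LipschitzWith.of_dist_le_mul fun f g => by
    simpa [dist_eq_norm, cesaroMean_sub] using norm_cesaroMean_le x n (f - g)

variable [MeasurableSpace K] [BorelSpace K]

theorem isClosed_setOf_tendsto_cesaroMean (μ : Measure K) [IsFiniteMeasure μ] (x : ℕ → K) :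
    IsClosed {f : C(K, ℂ) | Tendsto (cesaroMean x · f) atTop (𝓝 (∫ k, f k ∂μ))} :=
  (LipschitzWith.uniformEquicontinuous _ 1 (lipschitzWith_cesaroMean x)).equicontinuous
    |>.isClosed_setOfPred_tendsto (ContinuousMap.continuous_integral μ)

theorem uniformlyDistributed_iff_of_denseRange {μ : Measure K} [IsFiniteMeasure μ]
    {D : ℕ → C(K, ℂ)} (hD : DenseRange D) {x : ℕ → K} :
    UniformlyDistributed μ x ↔
      ∀ k, Tendsto (cesaroMean x · (D k)) atTop (𝓝 (∫ y, D k y ∂μ)) :=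
  ⟨fun hx k => hx (D k), fun hD_tendsto f =>
    hD.induction_on f (isClosed_setOf_tendsto_cesaroMean μ x) hD_tendsto⟩

end CesaroMean

theorem stmt18_general {G K : Type*} [AddCommGroup G] [AddCommGroup K]
    [TopologicalSpace K] [CompactSpace K]
    [TopologicalSpace.MetrizableSpace K] [MeasurableSpace K] [BorelSpace K]
    (μ : Measure K) [IsProbabilityMeasure μ]
    (a : ℕ → G) :
    IsFsigmaDelta {h : ↥(homSet G K) | UniformlyDistributed μ (fun n => h.1 (a n))} := by
  obtain ⟨D, hD⟩ := TopologicalSpace.exists_dense_seq C(K, ℂ)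
  have hU : {h : ↥(homSet G K) | UniformlyDistributed μ (fun n => h.1 (a n))} =
      ⋂ k, {h | Tendsto (cesaroMean (fun n => h.1 (a n)) · (D k)) atTop
        (𝓝 (∫ y, D k y ∂μ))} := by
    ext h
    simp only [Set.mem_ofPred_eq, Set.mem_iInter, uniformlyDistributed_iff_of_denseRange hD]
  rw [hU]
  refine IsFsigmaDelta.iInter fun k => isFsigmaDelta_setOf_tendsto (fun n => ?_) _
  exact continuous_cesaroMean (fun j => (continuous_apply (a j)).comp continuous_subtype_val) n _

/-- For an abelian group `G`, a compact metrizable abelian group `K` with normalized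
Haar measure `μ`, and a one-to-one sequence `S = {a_n : n ∈ ℕ}` in `G`, the set
`𝕌(S,K) = {h ∈ Hom(G,K) : (h(a_n))_n is uniformly distributed in K}` is an
`F_σδ`-subset of `Hom(G,K)`. -/
theorem stmt18 {G K : Type*} [AddCommGroup G] [AddCommGroup K]
    [TopologicalSpace K] [IsTopologicalAddGroup K] [CompactSpace K]
    [TopologicalSpace.MetrizableSpace K] [MeasurableSpace K] [BorelSpace K]
    (μ : Measure K) [μ.IsAddHaarMeasure] [IsProbabilityMeasure μ]
    (a : ℕ → G) (ha : Function.Injective a) :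
    IsFsigmaDelta {h : ↥(homSet G K) | UniformlyDistributed μ (fun n => h.1 (a n))} :=
  stmt18_general μ a
end
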